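/- (From the Euler–Lagrange equation to strong duality.) In the finite discrete setting, assume additionally that φ' is continuous. Suppose u ∈ E satisfies the discrete variational equation Σ_{t∈T} μ_t (φ'(|(G u)_t|)/|(G u)_t|) (G u)_t·(G w)_t = ℓ(w) for all w ∈ E, where a summand is taken to be 0 whenever (G u)_t = 0. Define σ : T → ℝ^d by σ_t := (φ'(|(G u)_t|)/|(G u)_t|) (G u)_t, with σ_t := 0 whenever (G u)_t = 0. Then σ satisfies the discrete divergence constraint, J(u) + J*(σ) = 0, u minimizes J over E, and σ minimizes J* over the set of all τ : T → ℝ^d satisfying the discrete divergence constraint. -/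

import Mathlib

open MeasureTheory

/-- The convex conjugate `φ*(r) = sup_{s ≥ 0} (r s − φ(s))`. -/
noncomputable def conj (φ : ℝ → ℝ) (r : ℝ) : ℝ :=
  ⨆ s : Set.Ici (0:ℝ), (r * (s : ℝ) - φ (s : ℝ))

/-- The right-continuous inverse `(φ')⁻¹(t) = sup {r ≥ 0 : φ' r ≤ t}`. -/
noncomputable def rcInv (φ' : ℝ → ℝ) (t : ℝ) : ℝ :=
  sSup {r : ℝ | 0 ≤ r ∧ φ' r ≤ t}

/-- An N-function `φ : [0,∞) → [0,∞)` with (right-continuous, non-decreasing)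
density `φ'`, modeled by functions on `ℝ` restricted to `[0,∞)`. -/
structure IsNFunction (φ φ' : ℝ → ℝ) : Prop where
  continuousOn : ContinuousOn φ (Set.Ici 0)
  convexOn : ConvexOn ℝ (Set.Ici 0) φ
  nonneg : ∀ t ∈ Set.Ici (0:ℝ), 0 ≤ φ t
  deriv_nonneg : ∀ t ∈ Set.Ici (0:ℝ), 0 ≤ φ' t
  deriv_mono : MonotoneOn φ' (Set.Ici 0)
  deriv_rightCont : ∀ t ∈ Set.Ici (0:ℝ), ContinuousWithinAt φ' (Set.Ici t) t
  eq_integral : ∀ t ∈ Set.Ici (0:ℝ), φ t = ∫ s in (0:ℝ)..t, φ' s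
  deriv_zero : φ' 0 = 0
  deriv_pos : ∀ t > (0:ℝ), 0 < φ' t
  deriv_tendsto : Filter.Tendsto φ' Filter.atTop Filter.atTop

open scoped Classical

/-!
Pointwise, the Fenchel–Young inequality `τ·x ≤ φ(|x|) + φ*(|τ|)` summed against `μ` and combined
with the divergence constraint gives weak duality `J(v) + J*(τ) ≥ 0` for every `v` and every
admissible `τ`. Equality holds in Fenchel–Young when `|τ| = φ'(|x|)` and `τ` is parallel to `x`,
which is exactly how `σ` is built from `u`; the Euler–Lagrange equation says that `σ` is
admissible, so the pair `(u, σ)` has zero duality gap and both are minimizers.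
-/

namespace IsNFunction

variable {φ φ' : ℝ → ℝ}

theorem intervalIntegrable (hN : IsNFunction φ φ') {a b : ℝ} (ha : 0 ≤ a) (hb : 0 ≤ b) :
    IntervalIntegrable φ' volume a b := by
  refine (hN.deriv_mono.mono fun x hx => ?_).intervalIntegrable
  rcases Set.mem_uIcc.mp hx with h | h
  · exact ha.trans h.1
  · exact hb.trans h.1

theorem sub_eq_integral (hN : IsNFunction φ φ') {s a : ℝ} (hs : 0 ≤ s) (ha : 0 ≤ a) :
    φ a - φ s = ∫ x in s..a, φ' x := by
  rw [hN.eq_integral a ha, hN.eq_integral s hs]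
  exact intervalIntegral.integral_interval_sub_left (hN.intervalIntegrable le_rfl ha)
    (hN.intervalIntegrable le_rfl hs)

theorem deriv_mul_sub_le (hN : IsNFunction φ φ') {s a : ℝ} (hs : 0 ≤ s) (ha : 0 ≤ a) :
    φ' s * (a - s) ≤ φ a - φ s := by
  rw [hN.sub_eq_integral hs ha]
  rcases le_total s a with h | h
  · have := intervalIntegral.integral_mono_on h intervalIntegrable_const
      (hN.intervalIntegrable hs ha)
      fun t ht => hN.deriv_mono (Set.mem_Ici.mpr hs) (Set.mem_Ici.mpr (hs.trans ht.1)) ht.1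
    rw [intervalIntegral.integral_const, smul_eq_mul] at this
    linarith
  · have := intervalIntegral.integral_mono_on h (hN.intervalIntegrable ha hs)
      intervalIntegrable_const
      fun t ht => hN.deriv_mono (Set.mem_Ici.mpr (ha.trans ht.1)) (Set.mem_Ici.mpr hs) ht.2
    rw [intervalIntegral.integral_const, smul_eq_mul] at this
    rw [intervalIntegral.integral_symm]
    linarith

theorem bddAbove_conj_range (hN : IsNFunction φ φ') (r : ℝ) :
    BddAbove (Set.range fun s : Set.Ici (0:ℝ) => r * (s : ℝ) - φ s) := by
  obtain ⟨s₁, hs₁⟩ := Filter.eventually_atTop.mp (hN.deriv_tendsto.eventually_ge_atTop r)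
  set s₀ := max s₁ 0
  have hs₀ : 0 ≤ s₀ := le_max_right _ _
  -- the tangent line at a point where `φ' ≥ r` bounds `r s - φ s` uniformly
  refine ⟨φ' s₀ * s₀ - φ s₀, ?_⟩
  rintro _ ⟨⟨s, hs⟩, rfl⟩
  have hr : r * s ≤ φ' s₀ * s := mul_le_mul_of_nonneg_right (hs₁ s₀ (le_max_left _ _)) hs
  have := hN.deriv_mul_sub_le hs₀ hs
  dsimp only
  linarith

theorem mul_le_add_conj (hN : IsNFunction φ φ') (r : ℝ) {s : ℝ} (hs : 0 ≤ s) :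
    r * s ≤ φ s + conj φ r := by
  have := le_ciSup (hN.bddAbove_conj_range r) (⟨s, hs⟩ : Set.Ici (0:ℝ))
  rw [conj]
  linarith

theorem conj_deriv (hN : IsNFunction φ φ') {s : ℝ} (hs : 0 ≤ s) :
    conj φ (φ' s) = φ' s * s - φ s := by
  have : Nonempty (Set.Ici (0:ℝ)) := ⟨⟨0, Set.self_mem_Ici⟩⟩
  refine le_antisymm (ciSup_le fun ⟨a, ha⟩ => ?_) ?_
  · have := hN.deriv_mul_sub_le hs ha
    dsimp only
    linarith
  · linarith [hN.mul_le_add_conj (φ' s) hs]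

variable {F : Type*} [NormedAddCommGroup F] [InnerProductSpace ℝ F]

theorem inner_le_add_conj (hN : IsNFunction φ φ') (y x : F) :
    inner ℝ y x ≤ φ ‖x‖ + conj φ ‖y‖ := by
  have := hN.mul_le_add_conj ‖y‖ (norm_nonneg x)
  linarith [real_inner_le_norm y x]

theorem inner_smul_self_eq_add_conj [DecidableEq F] (hN : IsNFunction φ φ') {c : ℝ} {x : F}
    (hc : c = if x = 0 then 0 else φ' ‖x‖ / ‖x‖) :
    inner ℝ (c • x) x = φ ‖x‖ + conj φ ‖c • x‖ := by
  by_cases hx : x = 0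
  · subst hx
    have := hN.conj_deriv (le_refl (0:ℝ))
    rw [hN.deriv_zero] at this
    simp [this]
  · rw [if_neg hx] at hc
    have hx' : ‖x‖ ≠ 0 := norm_ne_zero_iff.mpr hx
    have hnorm : ‖c • x‖ = φ' ‖x‖ := by
      rw [norm_smul, Real.norm_eq_abs, abs_of_nonneg, hc, div_mul_cancel₀ _ hx']
      exact hc ▸ div_nonneg (hN.deriv_nonneg _ (norm_nonneg x)) (norm_nonneg x)
    rw [hnorm, hN.conj_deriv (norm_nonneg x), real_inner_smul_left,
      real_inner_self_eq_norm_mul_norm, hc]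
    field_simp
    ring

theorem sum_inner_le_add_conj (hN : IsNFunction φ φ') {T : Type*} (s : Finset T) {μ : T → ℝ}
    (hμ : ∀ t ∈ s, 0 ≤ μ t) (τ x : T → F) :
    ∑ t ∈ s, μ t * inner ℝ (τ t) (x t) ≤
      ∑ t ∈ s, μ t * φ ‖x t‖ + ∑ t ∈ s, μ t * conj φ ‖τ t‖ := by
  rw [← Finset.sum_add_distrib]
  refine Finset.sum_le_sum fun t ht => ?_
  rw [← mul_add]
  exact mul_le_mul_of_nonneg_left (hN.inner_le_add_conj (τ t) (x t)) (hμ t ht)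

end IsNFunction

theorem euler_lagrange_strong_duality_general {d : ℕ}
    {T : Type*} [Fintype T]
    (μ : T → ℝ) (hμ : ∀ t, 0 < μ t)
    {E : Type*} [AddCommGroup E] [Module ℝ E]
    (G : E →ₗ[ℝ] (T → EuclideanSpace ℝ (Fin d)))
    (ℓ : E →ₗ[ℝ] ℝ)
    (φ φ' : ℝ → ℝ) (hN : IsNFunction φ φ')
    (J : E → ℝ) (hJ : ∀ v, J v = (∑ t, μ t * φ ‖G v t‖) - ℓ v)
    (Jstar : (T → EuclideanSpace ℝ (Fin d)) → ℝ)
    (hJstar : ∀ τ, Jstar τ = ∑ t, μ t * conj φ ‖τ t‖)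
    (u : E) (c : T → ℝ)
    (hc : ∀ t, c t = if G u t = 0 then 0 else φ' ‖G u t‖ / ‖G u t‖)
    (hEL : ∀ w : E, (∑ t, μ t * (c t * (inner ℝ (G u t) (G w t) : ℝ))) = ℓ w)
    (σ : T → EuclideanSpace ℝ (Fin d)) (hσ : ∀ t, σ t = c t • G u t) :
    (∀ w : E, (∑ t, μ t * (inner ℝ (σ t) (G w t) : ℝ)) = ℓ w) ∧
    J u + Jstar σ = 0 ∧
    (∀ v : E, J u ≤ J v) ∧
    (∀ τ : T → EuclideanSpace ℝ (Fin d),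
      (∀ w : E, (∑ t, μ t * (inner ℝ (τ t) (G w t) : ℝ)) = ℓ w) →
      Jstar σ ≤ Jstar τ) := by
  have hdiv : ∀ w : E, ∑ t, μ t * inner ℝ (σ t) (G w t) = ℓ w := fun w => by
    simp only [← hEL w, hσ, real_inner_smul_left]
  have hweak : ∀ v τ, (∀ w : E, ∑ t, μ t * inner ℝ (τ t) (G w t) = ℓ w) →
      0 ≤ J v + Jstar τ := fun v τ hτ => by
    have := hN.sum_inner_le_add_conj Finset.univ (fun t _ => (hμ t).le) τ (G v)
    rw [hJ, hJstar, ← hτ v]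
    linarith
  have hstrong : J u + Jstar σ = 0 := by
    have : ℓ u = ∑ t, μ t * (φ ‖G u t‖ + conj φ ‖σ t‖) := by
      rw [← hdiv u]
      refine Finset.sum_congr rfl fun t _ => ?_
      rw [hσ, hN.inner_smul_self_eq_add_conj (hc t)]
    rw [hJ, hJstar, this, Finset.sum_congr rfl fun t _ => mul_add _ _ _, Finset.sum_add_distrib]
    ring
  exact ⟨hdiv, hstrong, fun v => by linarith [hweak v σ hdiv],
    fun τ hτ => by linarith [hweak u τ hτ]⟩

/-- from the discrete Euler–Lagrange equation to strong duality. If `u`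
solves the discrete variational equation (with summands interpreted as `0` where
`(G u)_t = 0`), then `σ_t = (φ'(|(G u)_t|)/|(G u)_t|)(G u)_t` satisfies the discrete
divergence constraint, `J(u) + J*(σ) = 0`, `u` minimizes `J` over `E`, and `σ`
minimizes `J*` over the constraint set. -/
theorem euler_lagrange_strong_duality {d : ℕ} (hd : 1 ≤ d)
    {T : Type*} [Fintype T] [Nonempty T]
    (μ : T → ℝ) (hμ : ∀ t, 0 < μ t)
    {E : Type*} [AddCommGroup E] [Module ℝ E] [FiniteDimensional ℝ E]
    (G : E →ₗ[ℝ] (T → EuclideanSpace ℝ (Fin d))) (hG : Function.Injective G)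
    (ℓ : E →ₗ[ℝ] ℝ)
    (φ φ' : ℝ → ℝ) (hN : IsNFunction φ φ')
    (hcont : ContinuousOn φ' (Set.Ici 0))
    (J : E → ℝ) (hJ : ∀ v, J v = (∑ t, μ t * φ ‖G v t‖) - ℓ v)
    (Jstar : (T → EuclideanSpace ℝ (Fin d)) → ℝ)
    (hJstar : ∀ τ, Jstar τ = ∑ t, μ t * conj φ ‖τ t‖)
    (u : E) (c : T → ℝ)
    (hc : ∀ t, c t = if G u t = 0 then 0 else φ' ‖G u t‖ / ‖G u t‖)
    (hEL : ∀ w : E, (∑ t, μ t * (c t * (inner ℝ (G u t) (G w t) : ℝ))) = ℓ w)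
    (σ : T → EuclideanSpace ℝ (Fin d)) (hσ : ∀ t, σ t = c t • G u t) :
    (∀ w : E, (∑ t, μ t * (inner ℝ (σ t) (G w t) : ℝ)) = ℓ w) ∧
    J u + Jstar σ = 0 ∧
    (∀ v : E, J u ≤ J v) ∧
    (∀ τ : T → EuclideanSpace ℝ (Fin d),
      (∀ w : E, (∑ t, μ t * (inner ℝ (τ t) (G w t) : ℝ)) = ℓ w) →
      Jstar σ ≤ Jstar τ) :=
  euler_lagrange_strong_duality_general μ hμ G ℓ φ φ' hN J hJ Jstar hJstar u c hc hEL σ hσ
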